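/- arXiv:1803.05721 — 2 statements merged into one kernel-verified Lean document; each statement's English description precedes it below -/
import Mathlib

section
/- Let R be a commutative ring, n ≥ 3, i ≠ j in [n] and ξ ∈ R. Then the matrix ∧²t_{i,j}(ξ) ∈ GL_N(R) is a product of at most n − 2 elementary transvections of GL_N(R); that is, ∧²t_{i,j}(ξ) ∈ E^{n−2}(N,R). -/
open Finset MvPolynomial Matrix

/-- `V n` is the set `∧²[n]` of 2-element subsets of `[n] = {1, …, n}`
(modelled on `Fin n`). -/
abbrev V (n : ℕ) := {I : Finset (Fin n) // I.card = 2}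

/-- The variable `x_S` of the polynomial ring `R[x_I : I ∈ ∧²[n]]`
(interpreted as `0` if `S` is not a 2-element set, a case which never occurs below). -/
noncomputable def var2 (R : Type*) [CommRing R] (n : ℕ) (S : Finset (Fin n)) :
    MvPolynomial (V n) R :=
  if h : S.card = 2 then MvPolynomial.X ⟨S, h⟩ else 0

/-- The Plücker polynomial `f_{i,J} = Σ_{h=1}^{3} (−1)^h x_{{i,j_h}} x_{J∖{j_h}}`,
where `J = {j₁ < j₂ < j₃}`; the exponent `h` is recovered as the number of elements
of `J` that are `≤ j_h`. -/
noncomputable def pluckerPoly (R : Type*) [CommRing R] (n : ℕ) (i : Fin n)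
    (J : Finset (Fin n)) : MvPolynomial (V n) R :=
  ∑ j ∈ J, ((-1 : ℤ) ^ (J.filter (fun a => a ≤ j)).card) •
    (var2 R n {i, j} * var2 R n (J.erase j))

/-- The Plücker ideal `Plu(n,R)`, generated by all Plücker polynomials. -/
noncomputable def pluIdeal (R : Type*) [CommRing R] (n : ℕ) :
    Ideal (MvPolynomial (V n) R) :=
  Ideal.span {p | ∃ (i : Fin n) (J : Finset (Fin n)), i ∉ J ∧ J.card = 3 ∧
    p = pluckerPoly R n i J}

/-- `sign(I,J)`: the sign of the permutation sorting the concatenation of the increasing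
lists of `I` and of `J` into increasing order, computed as `(−1)^(number of inversions)`. -/
def signIJ {n : ℕ} (I J : Finset (Fin n)) : ℤ :=
  (-1) ^ (((I ×ˢ J).filter (fun p => p.2 < p.1)).card)

/-- The smaller element of a 2-element subset. -/
def lo {n : ℕ} (I : V n) : Fin n :=
  I.1.min' (Finset.card_pos.mp (by rw [I.2]; norm_num))

/-- The larger element of a 2-element subset. -/
def hi {n : ℕ} (I : V n) : Fin n :=
  I.1.max' (Finset.card_pos.mp (by rw [I.2]; norm_num))

/-- The exterior square (Cauchy–Binet) of a matrix: the `N×N` matrix, indexed by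
2-element subsets, whose entry at `({i₁<i₂},{j₁<j₂})` is
`x_{i₁j₁}x_{i₂j₂} − x_{i₁j₂}x_{i₂j₁}`. -/
def wedge {R : Type*} [CommRing R] {n : ℕ} (x : Matrix (Fin n) (Fin n) R) :
    Matrix (V n) (V n) R :=
  fun I J => x (lo I) (lo J) * x (hi I) (hi J) - x (lo I) (hi J) * x (hi I) (lo J)

/-- The elementary transvection `t_{S,T}(ξ) = e + ξ·e_{S,T}` of `GL_N(R)`, for distinct
2-element subsets `S, T` (interpreted as the identity in the degenerate cases, which
never occur below). -/
def transvN (R : Type*) [CommRing R] (n : ℕ) (S T : Finset (Fin n)) (ξ : R) :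
    Matrix (V n) (V n) R :=
  if h : S.card = 2 ∧ T.card = 2 ∧ S ≠ T then
    1 + Matrix.single ⟨S, h.1⟩ ⟨T, h.2.1⟩ ξ
  else 1

/-- The exterior number `a_{A,C}^H(g) = Σ_{(B,D)} sign(B,D)·g_{A,B}·g_{C,D}`, the sum over
all ordered pairs `(B,D)` of disjoint 2-element subsets with `B ∪ D = H`. -/
def extNum {R : Type*} [CommRing R] {n : ℕ} (g : Matrix (V n) (V n) R)
    (H : Finset (Fin n)) (A C : V n) : R :=
  ∑ B : V n, ∑ D : V n,
    if B.1 ∩ D.1 = ∅ ∧ B.1 ∪ D.1 = H then (signIJ B.1 D.1 : R) * (g A B * g C D) else 0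

/-- The 4×4 minor `M_I^J(x)` with rows `I` and columns `J` (both 4-element sets). -/
noncomputable def minor4 {R : Type*} [CommRing R] {n : ℕ}
    (x : Matrix (Fin n) (Fin n) R) (I J : Finset (Fin n)) : R :=
  if h : I.card = 4 ∧ J.card = 4 then
    Matrix.det (Matrix.of fun a b : Fin 4 =>
      x ↑(I.orderIsoOfFin h.1 a) ↑(J.orderIsoOfFin h.2 b))
  else 0

/-- The elementary group `E(n,R)`: the subgroup of `GL_n(R)` generated by the elementary
transvections `t_{i,j}(ξ) = e + ξ·e_{i,j}`, `i ≠ j`. -/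
def elemGroup (R : Type*) [CommRing R] (n : ℕ) :
    Subgroup (Matrix.GeneralLinearGroup (Fin n) R) :=
  Subgroup.closure {x | ∃ (i j : Fin n) (ξ : R), i ≠ j ∧
    (x : Matrix (Fin n) (Fin n) R) = 1 + Matrix.single i j ξ}

/-- `g` satisfies the exterior-number conditions with witness `θ`. -/
def extCond {R : Type*} [CommRing R] {n : ℕ} (g : Matrix (V n) (V n) R)
    (θ : Finset (Fin n) → Finset (Fin n) → R) : Prop :=
  ∀ H : Finset (Fin n), H.card = 4 → ∀ A C : V n,
    (¬ Disjoint A.1 C.1 → extNum g H A C = 0) ∧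
    (Disjoint A.1 C.1 → extNum g H A C = (signIJ A.1 C.1 : R) * θ (A.1 ∪ C.1) H)

/-- The symmetric matrix `B_𝓘` with `(B_𝓘)_{M,L} = sign(M,L)` if `M ⊔ L = 𝓘`
and `0` otherwise. -/
def bMat (R : Type*) [CommRing R] (n : ℕ) (𝓘 : Finset (Fin n)) :
    Matrix (V n) (V n) R :=
  fun M L => if M.1 ∩ L.1 = ∅ ∧ M.1 ∪ L.1 = 𝓘 then (signIJ M.1 L.1 : R) else 0

/-!
Write `t = 1 + ξ e_{ij}`. Rows `≠ i` and columns `≠ j` of `t` are those of the identity, so a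
2×2 minor of `t` differs from that of `1` only when its rows are `{i, k}` and its columns
`{j, l}`; it then equals `±(ξ δ_{kl} − δ_{il} δ_{kj})`. Hence
`∧²t = 1 + Σ_{k ∉ {i,j}} ±ξ e_{{i,k},{j,k}}`. The summands have pairwise zero products, since
a column `{j, k}` is never a row `{i, k'}`, so `∧²t` is the product of the `n − 2`
transvections `t_{{i,k},{j,k}}(±ξ)`.
-/

theorem List.prod_map_one_add_eq_one_add_sum {α ι : Type*} [Semiring α] (f : ι → α)
    {l : List ι} (h : ∀ a ∈ l, ∀ b ∈ l, f a * f b = 0) :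
    (l.map fun a => 1 + f a).prod = 1 + (l.map f).sum := by
  induction l with
  | nil => simp
  | cons a l ih =>
    have hal : f a * (l.map f).sum = 0 := by
      rw [← List.sum_map_mul_left]
      exact List.sum_eq_zero fun x hx => by
        obtain ⟨b, hb, rfl⟩ := List.mem_map.mp hx
        exact h a List.mem_cons_self b (List.mem_cons_of_mem a hb)
    rw [List.map_cons, List.prod_cons, ih fun a ha b hb => h a (.tail _ ha) b (.tail _ hb),
      List.map_cons, List.sum_cons, add_mul, one_mul, mul_add, mul_one, hal, add_zero,
      add_comm (f a), add_assoc]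

section Pairs

variable {α : Type*} [DecidableEq α]

lemma pair_eq_pair_iff_of_ne {a b c : α} (hb : b ≠ a) :
    ({a, b} : Finset α) = {a, c} ↔ b = c := by
  rw [pair_comm a b, pair_comm a c]
  exact insert_inj (by simpa using hb)

lemma pair_ne_pair_of_ne {a b c d : α} (hab : a ≠ b) (had : a ≠ d) :
    ({a, c} : Finset α) ≠ {b, d} :=
  ne_of_mem_of_not_mem' (mem_insert_self a {c}) (by simp [hab, had])

lemma ne_and_ne_of_mem_univ_sdiff_pair [Fintype α] {i j k : α}
    (hk : k ∈ (univ \ {i, j} : Finset α)) : i ≠ k ∧ j ≠ k := by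
  simp only [mem_sdiff, mem_insert, mem_singleton, mem_univ, true_and] at hk
  exact ⟨fun h => hk (.inl h.symm), fun h => hk (.inr h.symm)⟩

end Pairs

section TwoSubsets

variable {n : ℕ}

lemma lo_of_eq_pair {A : V n} {p q : Fin n} (h : A.1 = {p, q}) : lo A = min p q := by
  obtain ⟨S, hS⟩ := A
  subst h
  exact min'_pair p q

lemma hi_of_eq_pair {A : V n} {p q : Fin n} (h : A.1 = {p, q}) : hi A = max p q := by
  obtain ⟨S, hS⟩ := A
  subst h
  exact max'_pair p q

lemma exists_eq_pair_lt (A : V n) : ∃ p q, p < q ∧ A.1 = {p, q} := by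
  obtain ⟨p, q, hpq, hA⟩ := card_eq_two.mp A.2
  rcases hpq.lt_or_gt with h | h
  · exact ⟨p, q, h, hA⟩
  · exact ⟨q, p, h, hA.trans (pair_comm p q)⟩

lemma exists_eq_pair_of_mem {A : V n} {p : Fin n} (hp : p ∈ A.1) :
    ∃ k, k ≠ p ∧ A.1 = {p, k} := by
  obtain ⟨x, y, hxy, hA⟩ := card_eq_two.mp A.2
  rw [hA, mem_insert, mem_singleton] at hp
  rcases hp with rfl | rfl
  · exact ⟨y, hxy.symm, hA⟩
  · exact ⟨x, hxy, hA.trans (pair_comm x p)⟩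

end TwoSubsets

section Transvections

variable {R : Type*} [CommRing R] {n : ℕ}

lemma transvN_sub_one_apply {S T : Finset (Fin n)} (hST : S ≠ T) (ζ : R) (A B : V n) :
    (transvN R n S T ζ - 1) A B = if A.1 = S ∧ B.1 = T then ζ else 0 := by
  unfold transvN
  split_ifs with hcard hAB hAB
  · simp [single_apply, Subtype.ext_iff, hAB.1, hAB.2]
  · simp only [add_sub_cancel_left, single_apply, Subtype.ext_iff]
    rw [if_neg]
    exact fun h => hAB ⟨h.1.symm, h.2.symm⟩
  · exact absurd ⟨hAB.1 ▸ A.2, hAB.2 ▸ B.2, hST⟩ hcard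
  · simp

lemma transvN_sub_one_mul_eq_zero {S T S' T' : Finset (Fin n)} (h : T ≠ S') (ζ ζ' : R) :
    (transvN R n S T ζ - 1) * (transvN R n S' T' ζ' - 1) = 0 := by
  unfold transvN
  split_ifs
  · simp only [add_sub_cancel_left]
    exact single_mul_single_of_ne _ _ _ _ (fun he => h (congrArg Subtype.val he)) _
  all_goals simp

end Transvections

section ExteriorSquare

variable {R : Type*} [CommRing R] {n : ℕ}

def minor2 (x : Matrix (Fin n) (Fin n) R) (p q r s : Fin n) : R :=
  x p r * x q s - x p s * x q r

def sortSign (p q : Fin n) : R := if p ≤ q then 1 else -1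

lemma minor2_min_max (x : Matrix (Fin n) (Fin n) R) (p q r s : Fin n) :
    minor2 x (min p q) (max p q) (min r s) (max r s)
      = sortSign p q * sortSign r s * minor2 x p q r s := by
  by_cases hpq : p ≤ q <;> by_cases hrs : r ≤ s <;>
    simp [sortSign, minor2, le_of_not_ge, *] <;> ring

lemma sortSign_mul_sortSign_swap {p q : Fin n} (h : p ≠ q) :
    sortSign p q * sortSign q p = (-1 : R) := by
  rcases h.lt_or_gt with h | h <;> simp [sortSign, h.le, not_le.mpr h]

lemma wedge_apply_of_eq_pair (x : Matrix (Fin n) (Fin n) R) {A B : V n} {p q r s : Fin n}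
    (hA : A.1 = {p, q}) (hB : B.1 = {r, s}) :
    wedge x A B = sortSign p q * sortSign r s * minor2 x p q r s := by
  rw [← minor2_min_max, ← lo_of_eq_pair hA, ← hi_of_eq_pair hA, ← lo_of_eq_pair hB,
    ← hi_of_eq_pair hB]
  rfl

lemma wedge_congr_row {x y : Matrix (Fin n) (Fin n) R} {A : V n}
    (h : ∀ a ∈ A.1, x a = y a) (B : V n) : wedge x A B = wedge y A B := by
  have hlo : lo A ∈ A.1 := min'_mem _ _
  have hhi : hi A ∈ A.1 := max'_mem _ _
  simp only [wedge, h _ hlo, h _ hhi]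

lemma wedge_congr_col {x y : Matrix (Fin n) (Fin n) R} {B : V n}
    (h : ∀ b ∈ B.1, ∀ a, x a b = y a b) (A : V n) : wedge x A B = wedge y A B := by
  have hlo : lo B ∈ B.1 := min'_mem _ _
  have hhi : hi B ∈ B.1 := max'_mem _ _
  simp only [wedge, h _ hlo, h _ hhi]

lemma wedge_one : wedge (1 : Matrix (Fin n) (Fin n) R) = 1 := by
  ext A B
  obtain ⟨p, q, hpq, hA⟩ := exists_eq_pair_lt A
  obtain ⟨r, s, hrs, hB⟩ := exists_eq_pair_lt B
  have hsorted : ¬(p = s ∧ q = r) := fun ⟨hps, hqr⟩ => (hpq.trans (hqr ▸ hrs)).ne hps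
  have hAB : A = B ↔ p = r ∧ q = s := by
    refine ⟨fun h => ?_, fun ⟨hpr, hqs⟩ => Subtype.ext (by rw [hA, hB, hpr, hqs])⟩
    subst h
    have hlo := (lo_of_eq_pair hA).symm.trans (lo_of_eq_pair hB)
    have hhi := (hi_of_eq_pair hA).symm.trans (hi_of_eq_pair hB)
    simp only [min_eq_left hpq.le, min_eq_left hrs.le, max_eq_right hpq.le,
      max_eq_right hrs.le] at hlo hhi
    exact ⟨hlo, hhi⟩
  rw [wedge_apply_of_eq_pair 1 hA hB]
  simp only [sortSign, minor2, one_apply, if_pos hpq.le, if_pos hrs.le, one_mul, hAB]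
  split_ifs <;> simp_all

lemma minor2_one_add_single {i j k l : Fin n} (hij : i ≠ j) (hki : k ≠ i) (hlj : l ≠ j)
    (ξ : R) :
    minor2 (1 + single i j ξ) i k j l
      = (if k = l then ξ else 0) - if i = l ∧ k = j then 1 else 0 := by
  simp only [minor2, Matrix.add_apply, one_apply, single_apply, hij, hki.symm, hlj.symm]
  split_ifs <;> simp_all

lemma wedge_one_add_single_apply_eq_one_apply {i j : Fin n} (ξ : R) {A B : V n}
    (h : i ∉ A.1 ∨ j ∉ B.1) :
    wedge (1 + single i j ξ) A B = (1 : Matrix (V n) (V n) R) A B := by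
  rw [← wedge_one]
  rcases h with hiA | hjB
  · refine wedge_congr_row (fun a ha => ?_) B
    ext b
    simp [single_apply_of_row_ne (ne_of_mem_of_not_mem ha hiA).symm]
  · exact wedge_congr_col (fun b hb a => by
      simp [single_apply_of_col_ne _ _ (ne_of_mem_of_not_mem hb hjB).symm]) A

lemma wedge_one_add_single_apply_of_eq_pair {i j k l : Fin n} (hij : i ≠ j) (hki : k ≠ i)
    (hlj : l ≠ j) (ξ : R) {A B : V n} (hA : A.1 = {i, k}) (hB : B.1 = {j, l}) :
    wedge (1 + single i j ξ) A B
      = (1 : Matrix (V n) (V n) R) A B + if l = k then sortSign i k * sortSign j k * ξ else 0 := by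
  have hAB : A = B ↔ i = l ∧ k = j := by
    rw [← Subtype.coe_inj, hA, hB, ← coe_inj, coe_pair, coe_pair, Set.pair_eq_pair_iff]
    simp [hij]
  rw [wedge_apply_of_eq_pair _ hA hB, minor2_one_add_single hij hki hlj]
  simp only [one_apply, hAB]
  by_cases hlk : l = k
  · subst hlk
    simp [hki.symm]
  · rw [if_neg (Ne.symm hlk), if_neg hlk]
    split_ifs with hlkji
    · obtain ⟨rfl, rfl⟩ := hlkji
      rw [sortSign_mul_sortSign_swap hij]
      ring
    · ring

lemma wedge_one_add_single {i j : Fin n} (hij : i ≠ j) (ξ : R) :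
    wedge (1 + single i j ξ) = 1 + ∑ k ∈ univ \ {i, j},
      (transvN R n {i, k} {j, k} (sortSign i k * sortSign j k * ξ) - 1) := by
  ext A B
  have hterm : ∀ k ∈ univ \ {i, j},
      (transvN R n {i, k} {j, k} (sortSign i k * sortSign j k * ξ) - 1) A B
        = if A.1 = {i, k} ∧ B.1 = {j, k} then sortSign i k * sortSign j k * ξ else 0 :=
    fun k hk => transvN_sub_one_apply
      (pair_ne_pair_of_ne hij (ne_and_ne_of_mem_univ_sdiff_pair hk).1) _ A B
  rw [Matrix.add_apply, Matrix.sum_apply, sum_congr rfl hterm]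
  by_cases hij_mem : i ∈ A.1 ∧ j ∈ B.1
  · obtain ⟨k, hki, hA⟩ := exists_eq_pair_of_mem hij_mem.1
    obtain ⟨l, hlj, hB⟩ := exists_eq_pair_of_mem hij_mem.2
    have hcond : ∀ m, (A.1 = {i, m} ∧ B.1 = {j, m}) ↔ k = m ∧ l = k := fun m => by
      rw [hA, hB, pair_eq_pair_iff_of_ne hki, pair_eq_pair_iff_of_ne hlj]
      grind
    rw [wedge_one_add_single_apply_of_eq_pair hij hki hlj ξ hA hB]
    simp only [hcond, ite_and, sum_ite_eq]
    by_cases hlk : l = k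
    · simp [hlk, hki, hlk ▸ hlj]
    · simp [hlk]
  · rw [wedge_one_add_single_apply_eq_one_apply ξ (not_and_or.mp hij_mem), sum_eq_zero,
      add_zero]
    exact fun k _ => if_neg fun (h : A.1 = {i, k} ∧ B.1 = {j, k}) =>
      hij_mem ⟨h.1 ▸ mem_insert_self i {k}, h.2 ▸ mem_insert_self j {k}⟩

end ExteriorSquare

theorem stmt7_general (R : Type*) [CommRing R] (n : ℕ)
    (i j : Fin n) (hij : i ≠ j) (ξ : R) :
    ∃ L : List (Matrix (V n) (V n) R), L.length ≤ n - 2 ∧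
      (∀ f ∈ L, ∃ (S T : Finset (Fin n)) (ζ : R),
        S.card = 2 ∧ T.card = 2 ∧ S ≠ T ∧ f = transvN R n S T ζ) ∧
      wedge (1 + Matrix.single i j ξ) = L.prod := by
  let t : Fin n → Matrix (V n) (V n) R :=
    fun k => transvN R n {i, k} {j, k} (sortSign i k * sortSign j k * ξ)
  have hne : ∀ k ∈ (univ \ {i, j}).toList, i ≠ k ∧ j ≠ k :=
    fun k hk => ne_and_ne_of_mem_univ_sdiff_pair (mem_toList.mp hk)
  refine ⟨(univ \ {i, j}).toList.map t, ?_, ?_, ?_⟩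
  · rw [List.length_map, length_toList, card_sdiff_of_subset (subset_univ _), card_univ,
      Fintype.card_fin, card_pair hij]
  · intro f hf
    obtain ⟨k, hk, rfl⟩ := List.mem_map.mp hf
    obtain ⟨hik, hjk⟩ := hne k hk
    exact ⟨_, _, _, card_pair hik, card_pair hjk, pair_ne_pair_of_ne hij hik, rfl⟩
  · have hprod : ∀ a ∈ (univ \ {i, j}).toList, ∀ b ∈ (univ \ {i, j}).toList,
        (t a - 1) * (t b - 1) = 0 := fun a _ b hb =>
      transvN_sub_one_mul_eq_zero (pair_ne_pair_of_ne hij.symm (hne b hb).2) _ _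
    rw [wedge_one_add_single hij, ← sum_map_toList,
      ← List.prod_map_one_add_eq_one_add_sum _ hprod]
    simp only [add_sub_cancel]

/-- `∧²t_{i,j}(ξ) ∈ E^{n−2}(N,R)`: the exterior square of an elementary
transvection is a product of at most `n − 2` elementary transvections of `GL_N(R)`. -/
theorem stmt7 (R : Type*) [CommRing R] (n : ℕ) (hn : 3 ≤ n)
    (i j : Fin n) (hij : i ≠ j) (ξ : R) :
    ∃ L : List (Matrix (V n) (V n) R), L.length ≤ n - 2 ∧
      (∀ f ∈ L, ∃ (S T : Finset (Fin n)) (ζ : R),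
        S.card = 2 ∧ T.card = 2 ∧ S ≠ T ∧ f = transvN R n S T ζ) ∧
      wedge (1 + Matrix.single i j ξ) = L.prod :=
  stmt7_general R n i j hij ξ
end

section
/- Let R be a commutative ring, n ≥ 4, x ∈ GL_n(R), and set g = ∧²x. Then for every H ∈ ∧⁴[n] and all A, C ∈ ∧²[n]: if A ∩ C ≠ ∅ then a_{A,C}^H(g) = 0, and if A ∩ C = ∅ then a_{A,C}^H(g) = sign(A,C)·M_{A∪C}^H(x), where M_{A∪C}^H(x) is the 4×4 minor of x with rows A ∪ C and columns H. -/
open Finset MvPolynomial Matrix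

/-!
The exterior number `a_{A,C}^H(∧²x)` is the Laplace expansion, along the first two rows, of the
determinant of the `4 × 4` submatrix of `x` with rows `lo A, hi A, lo C, hi C` (in this order) and
columns `H`. Pulling back along the increasing enumeration `Fin 4 → H` reduces this to the
two-row Laplace expansion of a `4 × 4` determinant. That determinant has two equal rows when
`A ∩ C ≠ ∅`; otherwise sorting its rows is a permutation of sign `sign(A,C)`, which is checked
on the 24 elements of `S₄`.
-/

open Equiv Function

section
variable {R : Type*} [CommRing R] {m n : ℕ}

lemma lo_pair {a b : Fin n} (hab : a < b) (h : ({a, b} : Finset (Fin n)).card = 2) :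
    lo ⟨{a, b}, h⟩ = a := by
  simp [lo, hab.le]

lemma hi_pair {a b : Fin n} (hab : a < b) (h : ({a, b} : Finset (Fin n)).card = 2) :
    hi ⟨{a, b}, h⟩ = b := by
  simp [hi, hab.le]

lemma lo_mem (I : V n) : lo I ∈ I.1 := min'_mem _ _

lemma hi_mem (I : V n) : hi I ∈ I.1 := max'_mem _ _

lemma lo_lt_hi (I : V n) : lo I < hi I :=
  I.1.min'_lt_max'_of_card (by rw [I.2]; norm_num)

lemma val_eq_pair (I : V n) : I.1 = {lo I, hi I} :=
  (eq_of_subset_of_card_le (insert_subset (lo_mem I) (singleton_subset_iff.2 (hi_mem I)))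
    (by rw [I.2]; exact (card_pair (lo_lt_hi I).ne).ge)).symm

lemma wedge_pair (x : Matrix (Fin n) (Fin n) R) {a b c d : Fin n} (hab : a < b) (hcd : c < d)
    (h : ({a, b} : Finset (Fin n)).card = 2) (h' : ({c, d} : Finset (Fin n)).card = 2) :
    wedge x ⟨{a, b}, h⟩ ⟨{c, d}, h'⟩ = x a c * x b d - x a d * x b c := by
  rw [wedge, lo_pair hab, hi_pair hab, lo_pair hcd, hi_pair hcd]

def V.map (e : Fin m ↪o Fin n) (B : V m) : V n :=
  ⟨B.1.map e.toEmbedding, by rw [card_map, B.2]⟩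

lemma lo_map (e : Fin m ↪o Fin n) (B : V m) : lo (B.map e) = e (lo B) := by
  simp only [lo, V.map, map_eq_image]
  exact min'_image e.monotone _ _

lemma hi_map (e : Fin m ↪o Fin n) (B : V m) : hi (B.map e) = e (hi B) := by
  simp only [hi, V.map, map_eq_image]
  exact max'_image e.monotone _ _

lemma V.map_injective (e : Fin m ↪o Fin n) : Injective (V.map e) :=
  fun _ _ h => Subtype.ext (Finset.map_injective _ (congrArg Subtype.val h))

lemma signIJ_map (e : Fin m ↪o Fin n) (I J : Finset (Fin m)) :
    signIJ (I.map e.toEmbedding) (J.map e.toEmbedding) = signIJ I J := by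
  unfold signIJ
  rw [← prodMap_map_product, filter_map, card_map]
  congr 3
  ext p
  simp

lemma V.mem_range_map_of_subset (e : Fin m ↪o Fin n) {B : V n} {S : Finset (Fin m)}
    (h : B.1 ⊆ S.map e.toEmbedding) : B ∈ Set.range (V.map e) := by
  obtain ⟨u, -, hu⟩ := subset_map_iff.1 h
  exact ⟨⟨u, by rw [← card_map e.toEmbedding, ← hu, B.2]⟩, Subtype.ext hu.symm⟩

lemma extNum_map (e : Fin m ↪o Fin n) {g : Matrix (V n) (V n) R} {g' : Matrix (V m) (V m) R}
    {A C : V n} {A' C' : V m} (hA : ∀ B, g' A' B = g A (B.map e))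
    (hC : ∀ D, g' C' D = g C (D.map e)) (H : Finset (Fin m)) :
    extNum g (H.map e.toEmbedding) A C = extNum g' H A' C' := by
  symm
  refine Fintype.sum_of_injective _ (V.map_injective e) _ _ (fun B hB => ?_) (fun B => ?_)
  · refine sum_eq_zero fun D _ => if_neg fun h => hB (V.mem_range_map_of_subset e (S := H) ?_)
    exact h.2 ▸ subset_union_left
  refine Fintype.sum_of_injective _ (V.map_injective e) _ _ (fun D hD => ?_) (fun D => ?_)
  · refine if_neg fun h => hD (V.mem_range_map_of_subset e (S := H) ?_)
    exact h.2 ▸ subset_union_right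
  simp only [hA, hC, V.map, signIJ_map, ← map_inter, ← map_union, map_eq_empty, map_inj]

lemma wedge_submatrix_apply (x : Matrix (Fin n) (Fin n) R) (r : Fin m → Fin n)
    (e : Fin m ↪o Fin n) {A' : V m} {A : V n} (hlo : r (lo A') = lo A) (hhi : r (hi A') = hi A)
    (B : V m) : wedge (x.submatrix r e) A' B = wedge x A (B.map e) := by
  simp only [wedge, submatrix_apply, hlo, hhi, lo_map, hi_map]

lemma det_eq_extNum_wedge (M : Matrix (Fin 4) (Fin 4) R) :
    M.det = extNum (wedge M) univ ⟨{0, 1}, by decide⟩ ⟨{2, 3}, by decide⟩ := by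
  have huniv : (univ : Finset (V 4)) = {⟨{0, 1}, by decide⟩, ⟨{0, 2}, by decide⟩,
      ⟨{0, 3}, by decide⟩, ⟨{1, 2}, by decide⟩, ⟨{1, 3}, by decide⟩, ⟨{2, 3}, by decide⟩} := by
    decide
  simp +decide only [extNum, huniv, signIJ, sum_insert, sum_singleton, mem_insert,
    mem_singleton, if_true, if_false, card_filter, sum_product]
  simp (disch := decide) only [wedge_pair]
  rw [det_succ_row_zero]
  simp only [Fin.sum_univ_succ, det_fin_three, submatrix_apply, Fin.succAbove, Fin.isValue,
    Fin.succ_zero_eq_one, Fin.succ_one_eq_two, Fin.castSucc_zero, Fin.castSucc_one,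
    Fin.reduceSucc, Fin.reduceCastSucc, Fin.reduceLT, Fin.val_succ, Fin.coe_ofNat_eq_mod,
    Nat.zero_mod, univ_unique, Fin.default_eq_zero, sum_singleton, ↓reduceIte]
  ring

lemma extNum_wedge_eq_det (x : Matrix (Fin n) (Fin n) R) {H : Finset (Fin n)} (hH : H.card = 4)
    (A C : V n) :
    extNum (wedge x) H A C = (x.submatrix ![lo A, hi A, lo C, hi C] (H.orderEmbOfFin hH)).det := by
  rw [det_eq_extNum_wedge]
  conv_lhs => rw [← map_orderEmbOfFin_univ H hH]
  exact extNum_map _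
    (fun B => wedge_submatrix_apply _ _ _ (by rw [lo_pair (by decide)]; rfl)
      (by rw [hi_pair (by decide)]; rfl) B)
    (fun D => wedge_submatrix_apply _ _ _ (by rw [lo_pair (by decide)]; rfl)
      (by rw [hi_pair (by decide)]; rfl) D) _

lemma det_submatrix_pairs_eq_zero_of_not_disjoint (x : Matrix (Fin n) (Fin n) R)
    (c : Fin 4 → Fin n) {A C : V n} (h : ¬ Disjoint A.1 C.1) :
    (x.submatrix ![lo A, hi A, lo C, hi C] c).det = 0 := by
  obtain ⟨t, htA, htC⟩ := not_disjoint_iff.1 h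
  rw [val_eq_pair, mem_insert, mem_singleton] at htA htC
  obtain ⟨i, j, hij, hrow⟩ : ∃ i j : Fin 4, i ≠ j ∧
      ![lo A, hi A, lo C, hi C] i = ![lo A, hi A, lo C, hi C] j := by
    rcases htA with rfl | rfl <;> rcases htC with h | h
    exacts [⟨0, 2, by decide, h⟩, ⟨0, 3, by decide, h⟩, ⟨1, 2, by decide, h⟩,
      ⟨1, 3, by decide, h⟩]
  exact det_zero_of_row_eq hij (funext fun k => by simp only [submatrix_apply, hrow])

lemma exists_perm_eq_orderEmbOfFin_comp {α : Type*} [LinearOrder α] {S : Finset α}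
    (hS : S.card = m) {r : Fin m → α} (hr : Injective r) (hrS : ∀ i, r i ∈ S) :
    ∃ σ : Perm (Fin m), r = S.orderEmbOfFin hS ∘ σ := by
  set f : Fin m → Fin m := fun i => (S.orderIsoOfFin hS).symm ⟨r i, hrS i⟩
  have hf : Injective f := fun i j hij =>
    hr (congrArg Subtype.val ((S.orderIsoOfFin hS).symm.injective hij))
  refine ⟨Equiv.ofBijective f (Finite.injective_iff_bijective.1 hf), funext fun i => ?_⟩
  simp [f, ← coe_orderIsoOfFin_apply]

lemma sign_eq_signIJ_of_lt (σ : Perm (Fin 4)) (h01 : σ 0 < σ 1) (h23 : σ 2 < σ 3) :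
    (Perm.sign σ : ℤ) = signIJ {σ 0, σ 1} {σ 2, σ 3} := by
  revert σ
  decide

lemma injective_lo_hi_of_disjoint {A C : V n} (h : Disjoint A.1 C.1) :
    Injective ![lo A, hi A, lo C, hi C] := by
  have hne : ∀ {a c}, a ∈ A.1 → c ∈ C.1 → a ≠ c := fun ha hc hac =>
    disjoint_left.1 h ha (hac ▸ hc)
  have := lo_lt_hi A; have := lo_lt_hi C
  have := hne (lo_mem A) (lo_mem C); have := hne (lo_mem A) (hi_mem C)
  have := hne (hi_mem A) (lo_mem C); have := hne (hi_mem A) (hi_mem C)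
  intro i j hij
  fin_cases i <;> fin_cases j <;> simp_all [eq_comm, ne_of_gt]

lemma det_submatrix_pairs_of_disjoint (x : Matrix (Fin n) (Fin n) R) (c : Fin 4 → Fin n)
    {A C : V n} (h : Disjoint A.1 C.1) (hAC : (A.1 ∪ C.1).card = 4) :
    (x.submatrix ![lo A, hi A, lo C, hi C] c).det =
      signIJ A.1 C.1 * (x.submatrix ((A.1 ∪ C.1).orderEmbOfFin hAC) c).det := by
  set s := (A.1 ∪ C.1).orderEmbOfFin hAC
  obtain ⟨σ, hσ⟩ := exists_perm_eq_orderEmbOfFin_comp hAC (injective_lo_hi_of_disjoint h) (by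
    intro i; fin_cases i
    exacts [mem_union_left _ (lo_mem A), mem_union_left _ (hi_mem A),
      mem_union_right _ (lo_mem C), mem_union_right _ (hi_mem C)])
  have hrow : ∀ i, ![lo A, hi A, lo C, hi C] i = s (σ i) := fun i => congrFun hσ i
  have hA : A.1 = ({σ 0, σ 1} : Finset (Fin 4)).map s.toEmbedding := by
    rw [val_eq_pair A, map_insert, map_singleton]
    exact congrArg₂ _ (hrow 0) (congrArg _ (hrow 1))
  have hC : C.1 = ({σ 2, σ 3} : Finset (Fin 4)).map s.toEmbedding := by
    rw [val_eq_pair C, map_insert, map_singleton]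
    exact congrArg₂ _ (hrow 2) (congrArg _ (hrow 3))
  have hsign : signIJ A.1 C.1 = Perm.sign σ := by
    rw [hA, hC, signIJ_map, sign_eq_signIJ_of_lt σ]
    · exact s.lt_iff_lt.1 (by rw [← hrow, ← hrow]; exact lo_lt_hi A)
    · exact s.lt_iff_lt.1 (by rw [← hrow, ← hrow]; exact lo_lt_hi C)
  rw [hσ, hsign, ← det_permute, submatrix_submatrix]
  rfl

lemma minor4_eq_det_submatrix (x : Matrix (Fin n) (Fin n) R) {I J : Finset (Fin n)}
    (hI : I.card = 4) (hJ : J.card = 4) :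
    minor4 x I J = (x.submatrix (I.orderEmbOfFin hI) (J.orderEmbOfFin hJ)).det := by
  rw [minor4, dif_pos ⟨hI, hJ⟩]
  rfl

end

theorem stmt8_general (R : Type*) [CommRing R] (n : ℕ)
    (x : Matrix.GeneralLinearGroup (Fin n) R)
    (H : Finset (Fin n)) (hH : H.card = 4) (A C : V n) :
    (¬ Disjoint A.1 C.1 →
      extNum (wedge (x : Matrix (Fin n) (Fin n) R)) H A C = 0) ∧
    (Disjoint A.1 C.1 →
      extNum (wedge (x : Matrix (Fin n) (Fin n) R)) H A C =
        (signIJ A.1 C.1 : R) * minor4 (x : Matrix (Fin n) (Fin n) R) (A.1 ∪ C.1) H) := by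
  rw [extNum_wedge_eq_det _ hH]
  refine ⟨det_submatrix_pairs_eq_zero_of_not_disjoint _ _, fun h => ?_⟩
  have hAC : (A.1 ∪ C.1).card = 4 := by rw [card_union_of_disjoint h, A.2, C.2]
  rw [det_submatrix_pairs_of_disjoint _ _ h hAC, minor4_eq_det_submatrix _ hAC hH]

/-- for `g = ∧²x` with `x ∈ GL_n(R)`, the exterior numbers vanish for
intersecting `A, C` and equal the signed 4×4 minors `sign(A,C)·M_{A∪C}^H(x)` for
disjoint `A, C`. -/
theorem stmt8 (R : Type*) [CommRing R] (n : ℕ) (hn : 4 ≤ n)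
    (x : Matrix.GeneralLinearGroup (Fin n) R)
    (H : Finset (Fin n)) (hH : H.card = 4) (A C : V n) :
    (¬ Disjoint A.1 C.1 →
      extNum (wedge (x : Matrix (Fin n) (Fin n) R)) H A C = 0) ∧
    (Disjoint A.1 C.1 →
      extNum (wedge (x : Matrix (Fin n) (Fin n) R)) H A C =
        (signIJ A.1 C.1 : R) * minor4 (x : Matrix (Fin n) (Fin n) R) (A.1 ∪ C.1) H) :=
  stmt8_general R n x H hH A C
end
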